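/- Under the hypotheses of Proposition 4.7 (spray G on ℝⁿ with n ≥ 2; geodesic c : I → ℝⁿ; (n−1)-parameter geodesic variation V of c; parallel frame e₁,…,e_{n−1} with {c'(t), e_a(t)} a basis for all t and W_t = span{e_a(t)}; J determined by J(t)·c'(t) = 0 and J(t)·e_a(t) = ∂_{s^a}V(t,0,…,0); V restricted to I₀ × (−ε,ε)^{n−1} a diffeomorphism onto its open image U; J transversal with respect to (W_t) on I₀; Z : U → ℝⁿ the field with Z(V(t,s)) = ∂_tV(t,s)), let Ĵ(t) be the (n−1)×(n−1) matrix defined by J(t)·e_a(t) = Σ_b Ĵ(t)_{b a}·e_b(t) (well-defined since range J(t) ⊆ W_t). Then for all t ∈ I₀: d/dt det Ĵ(t) = trace(A_Z(c(t))) · det Ĵ(t). -/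

import Mathlib

/-! The variation fields `j_a = ∂_{s^a}V(·,0) = Σ_b Ĵ_{ba} e_b` satisfy `j_a' = DZ·j_a`: both are
the mixed second derivative of `V`, as one sees by differentiating `Z ∘ V = ∂ₜV`. The frame is
parallel, `e_b' = -N e_b`, so `Σ_b Ĵ'_{ba} e_b = Σ_b Ĵ_{ba} A_Z e_b`, i.e. `Ĵ' = Â Ĵ` for the block
`Â` of `A_Z` on `W_t`. By Euler's relation `D_yG(x,y) y = 2 G(x,y)` and the geodesic equation,
`A_Z c' = c'' + 2 G(c, c') = 0`, hence `trace A_Z = trace Â`, and Jacobi's formula gives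
`(det Ĵ)' = trace (Ĵ' adj Ĵ) = trace Â · det Ĵ`. -/

noncomputable section

/-- Euclidean coordinate space `ℝⁿ`. -/
abbrev En (n : ℕ) : Type := Fin n → ℝ

/-- A semispray on `ℝⁿ` in coordinates: a map `G : ℝⁿ × (ℝⁿ ∖ {0}) → ℝⁿ` that is
`C^∞` on the set where the second (velocity) variable is nonzero. -/
def IsSemispray (n : ℕ) (G : En n × En n → En n) : Prop :=
  ContDiffOn ℝ (⊤ : ℕ∞) G {p : En n × En n | p.2 ≠ 0}

/-- A spray: a semispray that is positively `2`-homogeneous in the velocity variable. -/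
def IsSpray (n : ℕ) (G : En n × En n → En n) : Prop :=
  IsSemispray n G ∧
    ∀ (x y : En n), y ≠ 0 → ∀ l : ℝ, 0 < l → G (x, l • y) = l ^ 2 • G (x, y)

/-- `c` is a geodesic of the semispray `G` on the set `I`:
`c` is `C^∞` on `I`, regular, and `c'' + 2 G(c, c') = 0` on `I`. -/
def IsGeodesicOn (n : ℕ) (G : En n × En n → En n) (c : ℝ → En n) (I : Set ℝ) : Prop :=
  ContDiffOn ℝ (⊤ : ℕ∞) c I ∧ (∀ t ∈ I, deriv c t ≠ 0) ∧
    ∀ t ∈ I, deriv (deriv c) t + (2 : ℝ) • G (c t, deriv c t) = 0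

/-- Partial Fréchet derivative of `G` in its first (base) variable. -/
def DxG (n : ℕ) (G : En n × En n → En n) (x y : En n) : En n →L[ℝ] En n :=
  fderiv ℝ (fun x' => G (x', y)) x

/-- Partial Fréchet derivative of `G` in its second (velocity) variable. -/
def DyG (n : ℕ) (G : En n × En n → En n) (x y : En n) : En n →L[ℝ] En n :=
  fderiv ℝ (fun y' => G (x, y')) y

/-- `N(t) = D_yG(c(t), c'(t))` along a curve `c`. -/
def Nc (n : ℕ) (G : En n × En n → En n) (c : ℝ → En n) (t : ℝ) : En n →L[ℝ] En n :=
  DyG n G (c t) (deriv c t)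

/-- Dynamical covariant derivative `∇v = v' + N·v` of a vector field `v` along `c`. -/
def covV (n : ℕ) (G : En n × En n → En n) (c : ℝ → En n) (v : ℝ → En n) (t : ℝ) : En n :=
  deriv v t + Nc n G c t (v t)

/-- Dynamical covariant derivative `∇J = J' + N∘J − J∘N` of an endomorphism field `J`
along `c`. -/
def covE (n : ℕ) (G : En n × En n → En n) (c : ℝ → En n)
    (J : ℝ → En n →L[ℝ] En n) (t : ℝ) : En n →L[ℝ] En n :=
  deriv J t + (Nc n G c t).comp (J t) - (J t).comp (Nc n G c t)

/-- Jacobi endomorphism `Φ = 2 D_xG(c,c') − N' − N∘N` along `c`. -/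
def Phi (n : ℕ) (G : En n × En n → En n) (c : ℝ → En n) (t : ℝ) : En n →L[ℝ] En n :=
  (2 : ℝ) • DxG n G (c t) (deriv c t) - deriv (fun t' => Nc n G c t') t
    - (Nc n G c t).comp (Nc n G c t)

/-- A parallel vector field along `c` on `I`: `∇v = v' + N·v = 0`. -/
def IsParallel (n : ℕ) (G : En n × En n → En n) (c : ℝ → En n) (I : Set ℝ)
    (v : ℝ → En n) : Prop :=
  ContDiffOn ℝ (⊤ : ℕ∞) v I ∧ ∀ t ∈ I, deriv v t + Nc n G c t (v t) = 0

/-- A Jacobi field along a geodesic `c` on `I`: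
`j'' + 2 D_yG(c,c')·j' + 2 D_xG(c,c')·j = 0`. -/
def IsJacobiField (n : ℕ) (G : En n × En n → En n) (c : ℝ → En n) (I : Set ℝ)
    (j : ℝ → En n) : Prop :=
  ContDiffOn ℝ (⊤ : ℕ∞) j I ∧ ∀ t ∈ I,
    deriv (deriv j) t + (2 : ℝ) • DyG n G (c t) (deriv c t) (deriv j t)
      + (2 : ℝ) • DxG n G (c t) (deriv c t) (j t) = 0

/-- A Jacobi tensor along `c` on `I`: a `C^∞` endomorphism field with `∇²J + Φ∘J = 0`. -/
def IsJacobiTensor (n : ℕ) (G : En n × En n → En n) (c : ℝ → En n) (I : Set ℝ)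
    (J : ℝ → En n →L[ℝ] En n) : Prop :=
  ContDiffOn ℝ (⊤ : ℕ∞) J I ∧ ∀ t ∈ I,
    covE n G c (fun t' => covE n G c J t') t + (Phi n G c t).comp (J t) = 0

/-- The open cube `(−ε, ε)^k`. -/
def cube (k : ℕ) (ε : ℝ) : Set (Fin k → ℝ) := {s | ∀ i, |s i| < ε}

/-- A `k`-parameter geodesic variation of the geodesic `c` on `I`:
a `C^∞` map `V : I × (−ε,ε)^k → ℝⁿ` with `V(t,0) = c(t)` and every `t ↦ V(t,s)`
a geodesic of `G` on `I`. -/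
def IsGeodesicVariation (n : ℕ) (G : En n × En n → En n) (c : ℝ → En n) (I : Set ℝ)
    (k : ℕ) (ε : ℝ) (V : ℝ × (Fin k → ℝ) → En n) : Prop :=
  ContDiffOn ℝ (⊤ : ℕ∞) V (I ×ˢ cube k ε) ∧ (∀ t ∈ I, V (t, 0) = c t) ∧
    ∀ s ∈ cube k ε, IsGeodesicOn n G (fun t => V (t, s)) I

/-- `∂_{s^a} V (t, 0)`: the variation vector field in direction `a` along the base curve. -/
def dS (n k : ℕ) (V : ℝ × (Fin k → ℝ) → En n) (a : Fin k) (t : ℝ) : En n :=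
  fderiv ℝ (fun s => V (t, s)) 0 (Pi.single a 1)

/-- The span `W_t` of a transversal frame `e₁(t), …, e_m(t)` along `c`. -/
def Wspan (n m : ℕ) (e : Fin m → ℝ → En n) (t : ℝ) : Submodule ℝ (En n) :=
  Submodule.span ℝ (Set.range fun a => e a t)

/-- A family `e₁, …, e_m` of parallel vector fields along `c` on `I` such that
`{c'(t), e₁(t), …, e_m(t)}` is a basis of `ℝⁿ` for every `t ∈ I`. -/
def IsParallelFrame (n m : ℕ) (G : En n × En n → En n) (c : ℝ → En n) (I : Set ℝ)
    (e : Fin m → ℝ → En n) : Prop :=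
  (∀ a, IsParallel n G c I (e a)) ∧
    ∀ t ∈ I,
      LinearIndependent ℝ (fun i : Option (Fin m) => i.elim (deriv c t) fun a => e a t) ∧
      Submodule.span ℝ
        (Set.range fun i : Option (Fin m) => i.elim (deriv c t) fun a => e a t) = ⊤

/-- The shape-operator-type tensor `A_Z(x) = DZ(x) + D_yG(x, Z(x))` associated to a
vector field `Z` (the coordinate form of `K ∘ DZ`). -/
def AZ (n : ℕ) (G : En n × En n → En n) (Z : En n → En n) (x : En n) : En n →L[ℝ] En n :=
  fderiv ℝ Z x + DyG n G x (Z x)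

open Filter Topology

open Matrix in
theorem sum_det_updateRow_eq_trace_mul_adjugate {n R : Type*} [Fintype n] [DecidableEq n]
    [CommRing R] (A B : Matrix n n R) :
    ∑ i, (A.updateRow i (B i)).det = (B * A.adjugate).trace := by
  simp only [← cramer_transpose_apply, cramer_eq_adjugate_mulVec, ← adjugate_transpose, trace,
    diag, mul_apply, mulVec, dotProduct, transpose_apply, mul_comm]

open Matrix in
theorem hasDerivAt_det {𝕜 ι : Type*} [NontriviallyNormedField 𝕜] [Fintype ι] [DecidableEq ι]
    {M : 𝕜 → Matrix ι ι 𝕜} {M' : Matrix ι ι 𝕜} {t₀ : 𝕜}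
    (hM : ∀ i j, HasDerivAt (fun t => M t i j) (M' i j) t₀) :
    HasDerivAt (fun t => (M t).det) (M' * (M t₀).adjugate).trace t₀ := by
  let D : ContinuousMultilinearMap 𝕜 (fun _ : ι => ι → 𝕜) 𝕜 :=
    ⟨detRowAlternating.toMultilinearMap,
      (continuous_id.matrix_det : Continuous fun A : Matrix ι ι 𝕜 => A.det)⟩
  have hrows : HasDerivAt (fun t i j => M t i j) (fun i j => M' i j) t₀ :=
    hasDerivAt_pi.2 fun i => hasDerivAt_pi.2 fun j => hM i j
  have h := (D.hasFDerivAt fun i j => M t₀ i j).comp_hasDerivAt t₀ hrows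
  simp only [ContinuousMultilinearMap.linearDeriv_apply] at h
  rw [← sum_det_updateRow_eq_trace_mul_adjugate]
  exact h

section TransverseTrace

variable {R E ι : Type*} [CommRing R] [AddCommGroup E] [Module R E] [Fintype ι] [DecidableEq ι]

theorem trace_eq_sum_repr_some_of_apply_none_eq_zero (b : Module.Basis (Option ι) R E)
    (A : E →ₗ[R] E) (hA : A (b none) = 0) :
    LinearMap.trace R E A = ∑ i, b.repr (A (b (some i))) (some i) := by
  simp [LinearMap.trace_eq_matrix_trace R b, Matrix.trace, Fintype.sum_option,
    LinearMap.toMatrix_apply, hA]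

theorem trace_mul_adjugate_eq_trace_mul_det_of_sum_smul_eq (b : Module.Basis (Option ι) R E)
    (A : E →ₗ[R] E) (hA : A (b none) = 0) (M M' : Matrix ι ι R)
    (h : ∀ a, ∑ i, M' i a • b (some i) = ∑ i, M i a • A (b (some i))) :
    (M' * M.adjugate).trace = LinearMap.trace R E A * M.det := by
  let Â : Matrix ι ι R := Matrix.of fun d i => b.repr (A (b (some i))) (some d)
  have hM' : M' = Â * M := by
    ext d a
    simpa [Â, Finsupp.single_apply, Matrix.mul_apply, mul_comm] using
      congrArg (fun v => b.repr v (some d)) (h a)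
  rw [hM', Matrix.mul_assoc, Matrix.mul_adjugate, Matrix.mul_smul, Matrix.mul_one,
    Matrix.trace_smul, smul_eq_mul, mul_comm, trace_eq_sum_repr_some_of_apply_none_eq_zero b A hA]
  rfl

end TransverseTrace

theorem differentiableAt_coeff_of_basis {𝕜 ι E : Type*} [NontriviallyNormedField 𝕜]
    [CompleteSpace 𝕜] [Fintype ι] [NormedAddCommGroup E] [NormedSpace 𝕜 E]
    [FiniteDimensional 𝕜 E] {u : ι → 𝕜 → E} {w : ι → 𝕜 → 𝕜} {x : 𝕜 → E} {t₀ : 𝕜}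
    (b : Module.Basis ι 𝕜 E) (hb : ∀ i, b i = u i t₀) (hu : ∀ i, DifferentiableAt 𝕜 (u i) t₀)
    (hx : DifferentiableAt 𝕜 x t₀) (hxw : ∀ᶠ t in 𝓝 t₀, x t = ∑ i, w i t • u i t) (i : ι) :
    DifferentiableAt 𝕜 (w i) t₀ := by
  let L : 𝕜 → (ι → 𝕜) →L[𝕜] E := fun t =>
    ∑ i, ContinuousLinearMap.smulRightL 𝕜 (ι → 𝕜) E (.proj i) (u i t)
  have hL : ∀ t c, L t c = ∑ i, c i • u i t := by simp [L]
  have hLd : DifferentiableAt 𝕜 L t₀ := DifferentiableAt.fun_sum fun i _ =>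
    (ContinuousLinearMap.smulRightL 𝕜 (ι → 𝕜) E (.proj i)).differentiableAt.comp t₀ (hu i)
  let L₀ : (ι → 𝕜) ≃L[𝕜] E := b.equivFun.symm.toContinuousLinearEquiv
  have hL₀ : (L₀ : (ι → 𝕜) →L[𝕜] E) = L t₀ := by
    ext1 c; simp [L₀, hL, hb]
  have hinv : DifferentiableAt 𝕜 (fun t => (L t).inverse (x t)) t₀ := by
    have hinv₀ := (contDiffAt_map_inverse (n := 1) L₀).differentiableAt one_ne_zero
    rw [hL₀] at hinv₀
    exact (hinv₀.comp t₀ hLd).clm_apply hx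
  -- invertibility is an open condition, so `w t = (L t)⁻¹ (x t)` near `t₀`
  have hw : (fun t => (L t).inverse (x t)) =ᶠ[𝓝 t₀] fun t j => w j t := by
    have hequiv : ∀ᶠ t in 𝓝 t₀, L t ∈ Set.range ((↑) : ((ι → 𝕜) ≃L[𝕜] E) → _) :=
      hLd.continuousAt.preimage_mem_nhds (hL₀ ▸ ContinuousLinearEquiv.nhds L₀)
    filter_upwards [hequiv, hxw] with t ⟨f, hf⟩ hxt
    rw [← hf, ContinuousLinearMap.inverse_equiv, hxt, ← hL, ← hf]
    exact f.symm_apply_apply _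
  exact differentiableAt_pi.1 (hinv.congr_of_eventuallyEq hw.symm) i

theorem sum_smul_deriv_coeff_eq {E ι : Type*} [NormedAddCommGroup E] [NormedSpace ℝ E]
    [Fintype ι] {j : ℝ → E} {m : ι → ℝ → ℝ} {m' : ι → ℝ} {e : ι → ℝ → E} {D N : E →L[ℝ] E}
    {t₀ : ℝ} (hj : j =ᶠ[𝓝 t₀] fun t => ∑ i, m i t • e i t) (hjd : HasDerivAt j (D (j t₀)) t₀)
    (hm : ∀ i, HasDerivAt (m i) (m' i) t₀) (he : ∀ i, HasDerivAt (e i) (-N (e i t₀)) t₀) :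
    ∑ i, m' i • e i t₀ = ∑ i, m i t₀ • (D + N) (e i t₀) := by
  have hsum := (HasDerivAt.fun_sum fun i _ => (hm i).smul (he i)).congr_of_eventuallyEq hj
  have hD := hjd.unique hsum
  rw [hj.self_of_nhds, map_sum] at hD
  simp only [map_smul, smul_neg, Finset.sum_add_distrib, Finset.sum_neg_distrib] at hD
  simp only [add_apply, smul_add, Finset.sum_add_distrib, hD]
  abel

section Flow

variable {P E : Type*} [NormedAddCommGroup P] [NormedSpace ℝ P] [NormedAddCommGroup E]
  [NormedSpace ℝ E]

theorem HasFDerivAt.hasDerivAt_comp_prodMk_left {f : ℝ × P → E} {f' : ℝ × P →L[ℝ] E}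
    {p : ℝ × P} (hf : HasFDerivAt f f' p) : HasDerivAt (fun t => f (t, p.2)) (f' (1, 0)) p.1 := by
  simpa [Function.comp_def] using
    hf.comp_hasDerivAt p.1 ((hasDerivAt_id p.1).prodMk (hasDerivAt_const p.1 p.2))

theorem hasDerivAt_fderiv_apply_of_flow {V : ℝ × P → E} {g : E → ℝ × P} {Z : E → E}
    {Ω : Set (ℝ × P)} {p₀ : ℝ × P} (hΩ : IsOpen Ω) (hV : ContDiffOn ℝ 2 V Ω)
    (hVΩ : IsOpen (V '' Ω)) (hg : DifferentiableOn ℝ g (V '' Ω)) (hgV : ∀ p ∈ Ω, g (V p) = p)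
    (hZ : ∀ p ∈ Ω, Z (V p) = deriv (fun t => V (t, p.2)) p.1) (hp₀ : p₀ ∈ Ω) (v : ℝ × P) :
    HasDerivAt (fun t => fderiv ℝ V (t, p₀.2) v) (fderiv ℝ Z (V p₀) (fderiv ℝ V p₀ v)) p₀.1 := by
  set F := fderiv ℝ V
  have hVd : ∀ p ∈ Ω, HasFDerivAt V (F p) p := fun p hp =>
    ((hV.contDiffAt (hΩ.mem_nhds hp)).differentiableAt two_ne_zero).hasFDerivAt
  have hV₀ : ContDiffAt ℝ 2 V p₀ := hV.contDiffAt (hΩ.mem_nhds hp₀)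
  have hF : HasFDerivAt F (fderiv ℝ F p₀) p₀ :=
    ((hV₀.fderiv_right (m := 1) le_rfl).differentiableAt one_ne_zero).hasFDerivAt
  set F'' := fderiv ℝ F p₀
  have hsymm : ∀ v w, F'' v w = F'' w v := hV₀.isSymmSndFDerivAt (by simp)
  have hU : V '' Ω ∈ 𝓝 (V p₀) := hVΩ.mem_nhds ⟨p₀, hp₀, rfl⟩
  have hg₀ : HasFDerivAt g (fderiv ℝ g (V p₀)) (V p₀) := (hg.differentiableAt hU).hasFDerivAt
  set Dg := fderiv ℝ g (V p₀)
  have hDg : ∀ w, Dg (F p₀ w) = w := by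
    have hid : HasFDerivAt (g ∘ V) (ContinuousLinearMap.id ℝ (ℝ × P)) p₀ :=
      (hasFDerivAt_id p₀).congr_of_eventuallyEq
        (eventually_of_mem (hΩ.mem_nhds hp₀) fun p hp => hgV p hp)
    exact DFunLike.congr_fun ((hg₀.comp p₀ (hVd p₀ hp₀)).unique hid)
  have hZd : HasFDerivAt Z ((ContinuousLinearMap.apply ℝ E (1, 0)).comp (F''.comp Dg)) (V p₀) := by
    have hF' : HasFDerivAt F F'' (g (V p₀)) := by rwa [hgV p₀ hp₀]
    refine ((ContinuousLinearMap.apply ℝ E (1, 0)).hasFDerivAt.comp _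
      (hF'.comp _ hg₀)).congr_of_eventuallyEq ?_
    filter_upwards [hU]
    rintro _ ⟨p, hp, rfl⟩
    simp only [Function.comp_apply, ContinuousLinearMap.apply_apply, hZ p hp, hgV p hp]
    exact (hVd p hp).hasDerivAt_comp_prodMk_left.deriv
  rw [hZd.fderiv]
  simp only [ContinuousLinearMap.comp_apply, ContinuousLinearMap.apply_apply, hDg, hsymm v]
  exact (ContinuousLinearMap.apply ℝ E v).hasFDerivAt.comp_hasDerivAt p₀.1
    hF.hasDerivAt_comp_prodMk_left

end Flow

theorem dyG_apply_self_of_isSpray {n : ℕ} {G : En n × En n → En n} (hG : IsSpray n G)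
    {x y : En n} (hy : y ≠ 0) : DyG n G x y y = (2 : ℝ) • G (x, y) := by
  have hGd : HasFDerivAt (fun y' => G (x, y')) (DyG n G x y) y := by
    have hopen : IsOpen {p : En n × En n | p.2 ≠ 0} := isOpen_ne_fun continuous_snd continuous_const
    exact (((hG.1.contDiffAt (hopen.mem_nhds hy)).differentiableAt (by simp)).comp y
      (hasFDerivAt_prodMk_right x y).differentiableAt).hasFDerivAt
  have hl : HasDerivAt (fun l : ℝ => G (x, l • y)) (DyG n G x y y) 1 :=
    hGd.comp_hasDerivAt_of_eq 1 (by simpa using (hasDerivAt_id (1 : ℝ)).smul_const y)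
      (one_smul ℝ y).symm
  have hr : HasDerivAt (fun l : ℝ => l ^ 2 • G (x, y)) ((2 : ℝ) • G (x, y)) 1 := by
    simpa using (hasDerivAt_pow 2 (1 : ℝ)).smul_const (G (x, y))
  exact hl.unique (hr.congr_of_eventuallyEq
    (eventually_of_mem (Ioi_mem_nhds one_pos) fun l hl => hG.2 x y hy l hl))

theorem IsParallel.hasDerivAt {n : ℕ} {G : En n × En n → En n} {c v : ℝ → En n} {I : Set ℝ}
    (hv : IsParallel n G c I v) (hI : IsOpen I) {t : ℝ} (ht : t ∈ I) :
    HasDerivAt v (-Nc n G c t (v t)) t := by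
  have hd := ((hv.1.contDiffAt (hI.mem_nhds ht)).differentiableAt (by simp)).hasDerivAt
  rwa [eq_neg_of_add_eq_zero_left (hv.2 t ht)] at hd

section ParallelFrame

variable {n m : ℕ} {G : En n × En n → En n} {c : ℝ → En n} {I : Set ℝ} {e : Fin m → ℝ → En n}

def IsParallelFrame.basis (he : IsParallelFrame n m G c I e) {t : ℝ} (ht : t ∈ I) :
    Module.Basis (Option (Fin m)) ℝ (En n) :=
  Module.Basis.mk (he.2 t ht).1 (he.2 t ht).2.ge

theorem IsParallelFrame.basis_apply (he : IsParallelFrame n m G c I e) {t : ℝ} (ht : t ∈ I)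
    (i : Option (Fin m)) : he.basis ht i = i.elim (deriv c t) fun a => e a t := by
  simp [IsParallelFrame.basis]

theorem IsParallelFrame.differentiableAt_coeff (he : IsParallelFrame n m G c I e)
    (hI : IsOpen I) {t₀ : ℝ} (ht₀ : t₀ ∈ I) (hc : DifferentiableAt ℝ (deriv c) t₀)
    {x : ℝ → En n} {w : Fin m → ℝ → ℝ} (hx : DifferentiableAt ℝ x t₀)
    (hxw : ∀ᶠ t in 𝓝 t₀, x t = ∑ b, w b t • e b t) (b : Fin m) :
    DifferentiableAt ℝ (w b) t₀ := by
  refine differentiableAt_coeff_of_basis (u := fun i t => i.elim (deriv c t) fun a => e a t)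
    (w := fun i t => i.elim 0 fun a => w a t) (he.basis ht₀) (he.basis_apply ht₀) ?_ hx ?_ (some b)
  · rintro (_ | a)
    exacts [hc, ((he.1 a).hasDerivAt hI ht₀).differentiableAt]
  · filter_upwards [hxw] with t ht
    simp [Fintype.sum_option, ht]

end ParallelFrame

theorem IsGeodesicOn.AZ_apply_deriv_eq_zero {n : ℕ} {G : En n × En n → En n} {c : ℝ → En n}
    {I : Set ℝ} (hc : IsGeodesicOn n G c I) (hG : IsSpray n G) {Z : En n → En n} {t : ℝ}
    (ht : t ∈ I) (hZc : Z (c t) = deriv c t)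
    (hcZ : HasDerivAt (deriv c) (fderiv ℝ Z (c t) (deriv c t)) t) :
    AZ n G Z (c t) (deriv c t) = 0 := by
  rw [AZ, add_apply, hZc, dyG_apply_self_of_isSpray hG (hc.2.1 t ht), ← hcZ.deriv]
  exact hc.2.2 t ht

theorem isOpen_cube (k : ℕ) (ε : ℝ) : IsOpen (cube k ε) := by
  simp only [cube, Set.ofPred_forall]
  exact isOpen_iInter_of_finite fun i => isOpen_lt (continuous_apply i).abs continuous_const

theorem zero_mem_cube {k : ℕ} {ε : ℝ} (hε : 0 < ε) : (0 : Fin k → ℝ) ∈ cube k ε :=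
  fun _ => by simpa using hε

namespace IsGeodesicVariation

variable {n k : ℕ} {G : En n × En n → En n} {c : ℝ → En n} {I : Set ℝ} {ε : ℝ}
  {V : ℝ × (Fin k → ℝ) → En n}

theorem hasFDerivAt (hV : IsGeodesicVariation n G c I k ε V) (hI : IsOpen I) (hε : 0 < ε)
    {t : ℝ} (ht : t ∈ I) : HasFDerivAt V (fderiv ℝ V (t, 0)) (t, 0) :=
  ((hV.1.contDiffAt ((hI.prod (isOpen_cube k ε)).mem_nhds ⟨ht, zero_mem_cube hε⟩)).differentiableAt
    (by simp)).hasFDerivAt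

theorem dS_eq (hV : IsGeodesicVariation n G c I k ε V) (hI : IsOpen I) (hε : 0 < ε) {t : ℝ}
    (ht : t ∈ I) (a : Fin k) : dS n k V a t = fderiv ℝ V (t, 0) (0, Pi.single a 1) := by
  have hVs : HasFDerivAt (fun s => V (t, s))
      ((fderiv ℝ V (t, 0)).comp (.inr ℝ ℝ (Fin k → ℝ))) 0 :=
    (hV.hasFDerivAt hI hε ht).comp 0 (hasFDerivAt_prodMk_right t 0)
  rw [dS, hVs.fderiv]
  rfl

theorem deriv_base_eq (hV : IsGeodesicVariation n G c I k ε V) (hI : IsOpen I) {t : ℝ}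
    (ht : t ∈ I) : deriv (fun t' => V (t', 0)) t = deriv c t :=
  Filter.EventuallyEq.deriv_eq (eventually_of_mem (hI.mem_nhds ht) hV.2.1)

theorem deriv_eq (hV : IsGeodesicVariation n G c I k ε V) (hI : IsOpen I) (hε : 0 < ε) {t : ℝ}
    (ht : t ∈ I) : deriv c t = fderiv ℝ V (t, 0) (1, 0) := by
  rw [← hV.deriv_base_eq hI ht]
  exact (hV.hasFDerivAt hI hε ht).hasDerivAt_comp_prodMk_left.deriv

variable {I₀ : Set ℝ} {g : En n → ℝ × (Fin k → ℝ)} {Z : En n → En n}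

theorem apply_eq_deriv_of_flow (hV : IsGeodesicVariation n G c I k ε V) (hI : IsOpen I)
    (hε : 0 < ε) (hI₀I : I₀ ⊆ I)
    (hZ : ∀ p ∈ I₀ ×ˢ cube k ε, Z (V p) = deriv (fun t' => V (t', p.2)) p.1) {t : ℝ}
    (ht : t ∈ I₀) : Z (c t) = deriv c t := by
  rw [← hV.2.1 t (hI₀I ht), hZ (t, 0) ⟨ht, zero_mem_cube hε⟩, hV.deriv_base_eq hI (hI₀I ht)]

theorem hasDerivAt_deriv_and_dS_of_flow (hV : IsGeodesicVariation n G c I k ε V) (hI : IsOpen I)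
    (hε : 0 < ε) (hI₀ : IsOpen I₀) (hI₀I : I₀ ⊆ I) (hVopen : IsOpen (V '' (I₀ ×ˢ cube k ε)))
    (hg : DifferentiableOn ℝ g (V '' (I₀ ×ˢ cube k ε)))
    (hgV : ∀ p ∈ I₀ ×ˢ cube k ε, g (V p) = p)
    (hZ : ∀ p ∈ I₀ ×ˢ cube k ε, Z (V p) = deriv (fun t' => V (t', p.2)) p.1) {t₀ : ℝ}
    (ht₀ : t₀ ∈ I₀) :
    HasDerivAt (deriv c) (fderiv ℝ Z (c t₀) (deriv c t₀)) t₀ ∧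
      ∀ a, HasDerivAt (dS n k V a) (fderiv ℝ Z (c t₀) (dS n k V a t₀)) t₀ := by
  have hflow := hasDerivAt_fderiv_apply_of_flow (hI₀.prod (isOpen_cube k ε))
    ((hV.1.mono (Set.prod_mono_left hI₀I)).of_le (WithTop.coe_le_coe.2 le_top)) hVopen hg hgV hZ
    (p₀ := (t₀, 0)) ⟨ht₀, zero_mem_cube hε⟩
  rw [hV.2.1 t₀ (hI₀I ht₀)] at hflow
  have hI₀nhds : I₀ ∈ 𝓝 t₀ := hI₀.mem_nhds ht₀
  refine ⟨?_, fun a => ?_⟩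
  · rw [hV.deriv_eq hI hε (hI₀I ht₀)]
    exact (hflow (1, 0)).congr_of_eventuallyEq
      (eventually_of_mem hI₀nhds fun t ht => hV.deriv_eq hI hε (hI₀I ht))
  · rw [hV.dS_eq hI hε (hI₀I ht₀)]
    exact (hflow (0, Pi.single a 1)).congr_of_eventuallyEq
      (eventually_of_mem hI₀nhds fun t ht => hV.dS_eq hI hε (hI₀I ht) a)

end IsGeodesicVariation

theorem transverse_determinant_liouville_general (n : ℕ)
    (G : En n × En n → En n) (hG : IsSpray n G)
    (I : Set ℝ) (hIopen : IsOpen I)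
    (c : ℝ → En n) (hc : IsGeodesicOn n G c I)
    (ε : ℝ) (hε : 0 < ε) (V : ℝ × (Fin (n - 1) → ℝ) → En n)
    (hV : IsGeodesicVariation n G c I (n - 1) ε V)
    (e : Fin (n - 1) → ℝ → En n) (he : IsParallelFrame n (n - 1) G c I e)
    (J : ℝ → En n →L[ℝ] En n)
    (hJe : ∀ t ∈ I, ∀ a, J t (e a t) = dS n (n - 1) V a t)
    (I₀ : Set ℝ) (hI₀open : IsOpen I₀) (hI₀sub : I₀ ⊆ I)
    (hVopen : IsOpen (V '' (I₀ ×ˢ cube (n - 1) ε)))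
    (g : En n → ℝ × (Fin (n - 1) → ℝ))
    (hg : ContDiffOn ℝ (⊤ : ℕ∞) g (V '' (I₀ ×ˢ cube (n - 1) ε)))
    (hgV : ∀ p ∈ I₀ ×ˢ cube (n - 1) ε, g (V p) = p)
    (Z : En n → En n)
    (hZ : ∀ p ∈ I₀ ×ˢ cube (n - 1) ε, Z (V p) = deriv (fun t' => V (t', p.2)) p.1)
    (M : ℝ → Matrix (Fin (n - 1)) (Fin (n - 1)) ℝ)
    (hM : ∀ t ∈ I₀, ∀ a, J t (e a t) = ∑ b, M t b a • e b t) :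
    ∀ t ∈ I₀,
      deriv (fun t' => (M t').det) t
        = LinearMap.trace ℝ (En n) ((AZ n G Z (c t)).toLinearMap) * (M t).det := by
  intro t₀ ht₀
  have ht₀I : t₀ ∈ I := hI₀sub ht₀
  obtain ⟨hcZ, hjZ⟩ := hV.hasDerivAt_deriv_and_dS_of_flow hIopen hε hI₀open hI₀sub hVopen
    (hg.differentiableOn (by simp)) hgV hZ ht₀
  have hZc : Z (c t₀) = deriv c t₀ := hV.apply_eq_deriv_of_flow hIopen hε hI₀sub hZ ht₀
  have hjM : ∀ a, dS n (n - 1) V a =ᶠ[𝓝 t₀] fun t => ∑ b, M t b a • e b t := fun a =>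
    eventually_of_mem (hI₀open.mem_nhds ht₀) fun t ht =>
      (hJe t (hI₀sub ht) a).symm.trans (hM t ht a)
  have hMd : ∀ b a, HasDerivAt (fun t => M t b a) (deriv (fun t => M t b a) t₀) t₀ := fun b a =>
    (he.differentiableAt_coeff hIopen ht₀I hcZ.differentiableAt (hjZ a).differentiableAt
      (hjM a) b).hasDerivAt
  have hcoeff : ∀ a, ∑ b, deriv (fun t => M t b a) t₀ • e b t₀
      = ∑ b, M t₀ b a • AZ n G Z (c t₀) (e b t₀) := fun a => by
    rw [sum_smul_deriv_coeff_eq (hjM a) (hjZ a) (fun b => hMd b a)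
      (fun b => (he.1 b).hasDerivAt hIopen ht₀I), AZ, hZc]
    rfl
  rw [(hasDerivAt_det hMd).deriv]
  refine trace_mul_adjugate_eq_trace_mul_det_of_sum_smul_eq (he.basis ht₀I) _ ?_ _ _ ?_
  · simpa [he.basis_apply] using hc.AZ_apply_deriv_eq_zero hG ht₀I hZc hcZ
  · simpa [he.basis_apply] using hcoeff

/-- Proposition 4.7, equation (eq:J2), in coordinates (a Liouville-type formula): if
`Ĵ(t) = M t` is the transverse matrix of `J` in the parallel frame `e`, then
`d/dt det Ĵ = trace(A_Z(c(t))) · det Ĵ` on `I₀`. -/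
theorem transverse_determinant_liouville (n : ℕ) (hn : 2 ≤ n)
    (G : En n × En n → En n) (hG : IsSpray n G)
    (I : Set ℝ) (hIopen : IsOpen I) (hIconn : I.OrdConnected)
    (c : ℝ → En n) (hc : IsGeodesicOn n G c I)
    (ε : ℝ) (hε : 0 < ε) (V : ℝ × (Fin (n - 1) → ℝ) → En n)
    (hV : IsGeodesicVariation n G c I (n - 1) ε V)
    (e : Fin (n - 1) → ℝ → En n) (he : IsParallelFrame n (n - 1) G c I e)
    (J : ℝ → En n →L[ℝ] En n)
    (hJc : ∀ t ∈ I, J t (deriv c t) = 0)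
    (hJe : ∀ t ∈ I, ∀ a, J t (e a t) = dS n (n - 1) V a t)
    (I₀ : Set ℝ) (hI₀open : IsOpen I₀) (hI₀conn : I₀.OrdConnected) (hI₀sub : I₀ ⊆ I)
    (hVinj : Set.InjOn V (I₀ ×ˢ cube (n - 1) ε))
    (hVopen : IsOpen (V '' (I₀ ×ˢ cube (n - 1) ε)))
    (g : En n → ℝ × (Fin (n - 1) → ℝ))
    (hg : ContDiffOn ℝ (⊤ : ℕ∞) g (V '' (I₀ ×ˢ cube (n - 1) ε)))
    (hgV : ∀ p ∈ I₀ ×ˢ cube (n - 1) ε, g (V p) = p)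
    (htrans : ∀ t ∈ I₀, ∀ x, J t x ∈ Wspan n (n - 1) e t)
    (Z : En n → En n)
    (hZ : ∀ p ∈ I₀ ×ˢ cube (n - 1) ε, Z (V p) = deriv (fun t' => V (t', p.2)) p.1)
    (M : ℝ → Matrix (Fin (n - 1)) (Fin (n - 1)) ℝ)
    (hM : ∀ t ∈ I₀, ∀ a, J t (e a t) = ∑ b, M t b a • e b t) :
    ∀ t ∈ I₀,
      deriv (fun t' => (M t').det) t
        = LinearMap.trace ℝ (En n) ((AZ n G Z (c t)).toLinearMap) * (M t).det :=
  transverse_determinant_liouville_general n G hG I hIopen c hc ε hε V hV e he J hJe I₀ hI₀open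
    hI₀sub hVopen g hg hgV Z hZ M hM
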